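/- arXiv:0801.1766 — 6 statements merged into one kernel-verified Lean document; each statement's English description precedes it below -/
import Mathlib

section
/- Let ρ be the n-cycle (1 2 … n) and σ ∈ S_n with σρσ⁻¹ ∉ ⟨ρ⟩. Define A to be the n×n matrix over the polynomial (or free commutative monoid) ring in variables x_1,…,x_n with A_{i,j} = x_{ρ^{i-1}(j)} (each row the cyclic shift of the previous), and let B be the n×n matrix whose first row is (x_1,…,x_n) permuted by σ and whose row i is obtained by applying ρ (i−1) times to the first row. Then there do not exist permutation matrices P and Q with A = P·B·Q. -/
open Finset Matrix

/-- The cyclic permutation `(1 2 … n)`, acting on `ZMod n` by `j ↦ j + 1`. -/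
def rho (n : ℕ) : Equiv.Perm (ZMod n) := Equiv.addLeft 1

/-- `M` is an `n × n` doubly stochastic matrix. -/
def IsDS (n : ℕ) [NeZero n] (M : Matrix (ZMod n) (ZMod n) ℝ) : Prop :=
  (∀ i j, 0 ≤ M i j) ∧ (∀ i, ∑ j, M i j = 1) ∧ (∀ j, ∑ i, M i j = 1)

/-- The permutation matrix of `p` (entry `(i,j)` is `1` iff `p j = i`). -/
def PM {R : Type*} [Zero R] [One R] (n : ℕ) (p : Equiv.Perm (ZMod n)) :
    Matrix (ZMod n) (ZMod n) R :=
  fun i j => if p j = i then 1 else 0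

/-- Friedland's polytope `Φ_{n,n}`: nonnegative `n² × n²` matrices, doubly stochastic in the
double-index sense, satisfying the partial-sum constraints. -/
def Phi (n : ℕ) [NeZero n] : Set (Matrix (ZMod n × ZMod n) (ZMod n × ZMod n) ℝ) :=
  {C | (∀ p q, 0 ≤ C p q) ∧
       (∀ p, ∑ q, C p q = 1) ∧ (∀ q, ∑ p, C p q = 1) ∧
       (∀ i k l, ∑ j, C (i, k) (j, l) = ∑ j, C (0, k) (j, l)) ∧
       (∀ i k l, ∑ j, C (j, k) (i, l) = ∑ j, C (0, k) (j, l)) ∧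
       (∀ i j k, ∑ l, C (i, k) (j, l) = ∑ l, C (i, 0) (j, l)) ∧
       (∀ i j k, ∑ l, C (i, l) (j, k) = ∑ l, C (i, 0) (j, l))}

/-- The polytope `Ψ_{n,n}`: the convex hull of Kronecker products of doubly stochastic
matrices. -/
def Psi (n : ℕ) [NeZero n] : Set (Matrix (ZMod n × ZMod n) (ZMod n × ZMod n) ℝ) :=
  convexHull ℝ {M | ∃ A B, IsDS n A ∧ IsDS n B ∧ M = Matrix.kroneckerMap (· * ·) A B}

/-- The matrix `T`, with `T_{(i,k),(j,l)} = 1/n` iff `σρ^{j-1}(l) = ρ^{i-1}(k)`. -/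
noncomputable def Tmat (n : ℕ) (σ : Equiv.Perm (ZMod n)) :
    Matrix (ZMod n × ZMod n) (ZMod n × ZMod n) ℝ :=
  fun p q => if σ (q.2 + q.1) = p.2 + p.1 then (1 : ℝ) / n else 0

/-- The circulant matrix of variables whose `i`-th row is `ρ^{i-1}` applied to
`(x_1, …, x_n)`, i.e. `A_{i,k} = x_{ρ^{i-1}(k)}`. -/
noncomputable def Amat (n : ℕ) : Matrix (ZMod n) (ZMod n) (MvPolynomial (ZMod n) ℝ) :=
  fun i k => MvPolynomial.X (k + i)

/-- The matrix of variables whose first row is `(x_1, …, x_n)` permuted by `σ` and whose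
`j`-th row is `ρ^{j-1}` applied to the first row: `B_{j,l} = x_{σ(ρ^{j-1}(l))}`. -/
noncomputable def Bmat (n : ℕ) (σ : Equiv.Perm (ZMod n)) :
    Matrix (ZMod n) (ZMod n) (MvPolynomial (ZMod n) ℝ) :=
  fun j l => MvPolynomial.X (σ (l + j))

/-- If `σρσ⁻¹ ∉ ⟨ρ⟩`, there are no permutation matrices `P, Q` with `A = P B Q`. -/
theorem stmt6 (n : ℕ) [NeZero n] (hn : 4 ≤ n) (σ : Equiv.Perm (ZMod n))
    (hσ : σ * rho n * σ⁻¹ ∉ Subgroup.zpowers (rho n)) :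
    ¬ ∃ p q : Equiv.Perm (ZMod n), Amat n = PM n p * Bmat n σ * PM n q := by
  rintro ⟨p, q, h⟩
  -- entrywise equation
  have key : ∀ i k : ZMod n, σ (q k + p⁻¹ i) = k + i := by
    intro i k
    have h2 := congrFun (congrFun h i) k
    simp only [Amat, Bmat, PM, Matrix.mul_apply, ite_mul, one_mul, zero_mul,
      mul_ite, mul_one, mul_zero, Finset.sum_ite_eq, Finset.mem_univ, if_true] at h2
    simp only [Equiv.apply_eq_iff_eq_symm_apply, Finset.sum_ite_eq',
      Finset.mem_univ, if_true] at h2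
    exact (MvPolynomial.X_injective h2).symm
  have hq : ∀ k : ZMod n, q k = σ⁻¹ k - p⁻¹ 0 := by
    intro k
    have h0 := key 0 k
    rw [add_zero] at h0
    have h3 : q k + p⁻¹ 0 = σ⁻¹ k := Equiv.Perm.eq_inv_iff_eq.mpr h0
    rw [← h3]; ring
  have key2 : ∀ i k : ZMod n, σ (σ⁻¹ k + (p⁻¹ i - p⁻¹ 0)) = k + i := by
    intro i k
    have hk := key i k
    rw [hq k] at hk
    rw [← hk]
    congr 1
    ring
  have cinj : Function.Injective (fun i : ZMod n => p⁻¹ i - p⁻¹ 0) := by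
    intro i i' hii
    have h1 := key2 i (σ 0)
    have h2 := key2 i' (σ 0)
    simp only at hii
    rw [hii] at h1
    rw [h1] at h2
    exact add_left_cancel h2
  obtain ⟨i₀, hi₀⟩ := (Finite.injective_iff_surjective.mp cinj) 1
  simp only at hi₀
  have hconj : ∀ k : ZMod n, σ (σ⁻¹ k + 1) = k + i₀ := by
    intro k
    have hk := key2 i₀ k
    rwa [hi₀] at hk
  apply hσ
  rw [Subgroup.mem_zpowers_iff]
  refine ⟨(i₀.val : ℤ), ?_⟩
  have hpow : ∀ (m : ℕ) (k : ZMod n), ((rho n) ^ m) k = (m : ZMod n) + k := by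
    intro m
    induction m with
    | zero => intro k; simp
    | succ m ih =>
      intro k
      rw [pow_succ, Equiv.Perm.mul_apply, ih]
      show (m : ZMod n) + ((rho n) k) = ((m + 1 : ℕ) : ZMod n) + k
      show (m : ZMod n) + (1 + k) = ((m + 1 : ℕ) : ZMod n) + k
      push_cast; ring
  ext k
  rw [zpow_natCast, hpow]
  simp only [Equiv.Perm.mul_apply]
  have hr : (rho n) (σ⁻¹ k) = σ⁻¹ k + 1 := by
    show (1 : ZMod n) + σ⁻¹ k = σ⁻¹ k + 1
    ring
  rw [hr, hconj]
  simp only [ZMod.natCast_val, ZMod.cast_id]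
  ring
end

section
/- Let A and B be the circulant-type variable matrices built from ρ and σ as above, and suppose A = P B Q for permutation matrices P, Q. Then there exist distinct i, j with σ⁻¹ρσ = ρ^{j−i}; in particular σρσ⁻¹ lies in the subgroup generated by ρ. -/
open Finset Matrix

/-!
Comparing entries of `A = P B Q` gives `σ (q k + p⁻¹ i) = k + i`, so `σ (y + 1) - σ y` is the
constant `p 1 - p 0`: conjugation by `σ` sends `ρ` to a power of `ρ`. It therefore maps the finite
group `⟨ρ⟩` into itself, and, preserving orders, onto itself; hence `σ⁻¹ ρ σ ∈ ⟨ρ⟩` as well. Since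
`ρ` has finite order, every power of `ρ` is `ρ ^ (j - i)` for some `i ≠ j`.
-/

theorem inv_mul_mul_mem_zpowers_of_mul_mul_inv_mem {G : Type*} [Group G] {g x : G}
    (hx : IsOfFinOrder x) (h : g * x * g⁻¹ ∈ Subgroup.zpowers x) :
    g⁻¹ * x * g ∈ Subgroup.zpowers x := by
  have : Finite (Subgroup.zpowers x) := hx.finite_zpowers
  have hsemi : SemiconjBy g x (g * x * g⁻¹) := by simp [SemiconjBy, mul_assoc]
  have heq : Subgroup.zpowers (g * x * g⁻¹) = Subgroup.zpowers x :=
    Subgroup.eq_of_le_of_card_ge (Subgroup.zpowers_le.mpr h) <| by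
      rw [Nat.card_zpowers, Nat.card_zpowers, hsemi.orderOf_eq]
  obtain ⟨k, hk⟩ := Subgroup.mem_zpowers_iff.mp (heq ▸ Subgroup.mem_zpowers x)
  rw [conj_zpow] at hk
  refine ⟨k, ?_⟩
  conv_rhs => rw [← hk]
  group

theorem exists_ne_zpow_sub_of_mem_zpowers {G : Type*} [Group G] {x y : G}
    (hx : IsOfFinOrder x) (hy : y ∈ Subgroup.zpowers x) :
    ∃ i j : ℤ, i ≠ j ∧ y = x ^ (j - i) := by
  obtain ⟨k, rfl⟩ := Subgroup.mem_zpowers_iff.mp hy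
  rcases eq_or_ne k 0 with rfl | hk
  · exact ⟨0, orderOf x, by exact_mod_cast hx.orderOf_pos.ne, by simp⟩
  · exact ⟨0, k, hk.symm, by simp⟩

lemma PM_mul_apply {R : Type*} [NonAssocSemiring R] {n : ℕ} [NeZero n] (p : Equiv.Perm (ZMod n))
    (M : Matrix (ZMod n) (ZMod n) R) (i k : ZMod n) :
    (PM (R := R) n p * M) i k = M (p.symm i) k := by
  simp only [Matrix.mul_apply, PM, ite_mul, one_mul, zero_mul]
  rw [Finset.sum_eq_single (p.symm i)] <;> simp +contextual [Equiv.eq_symm_apply]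

lemma mul_PM_apply {R : Type*} [NonAssocSemiring R] {n : ℕ} [NeZero n] (q : Equiv.Perm (ZMod n))
    (M : Matrix (ZMod n) (ZMod n) R) (i k : ZMod n) :
    (M * PM (R := R) n q) i k = M i (q k) := by
  simp only [Matrix.mul_apply, PM, mul_ite, mul_one, mul_zero]
  rw [Finset.sum_eq_single (q k)] <;> simp +contextual [eq_comm]

lemma rho_apply (n : ℕ) (x : ZMod n) : rho n x = x + 1 :=
  add_comm 1 x

lemma rho_pow_apply (n k : ℕ) (x : ZMod n) : (rho n ^ k) x = x + k := by
  induction k with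
  | zero => simp
  | succ m ih =>
    rw [pow_succ', Equiv.Perm.mul_apply, ih, rho_apply, Nat.cast_succ, add_assoc]

lemma mul_rho_mul_inv_eq_pow {n : ℕ} [NeZero n] {f : Equiv.Perm (ZMod n)} {d : ZMod n}
    (hf : ∀ y, f (y + 1) = f y + d) : f * rho n * f⁻¹ = rho n ^ d.val := by
  ext x
  rw [Equiv.Perm.mul_apply, Equiv.Perm.mul_apply, rho_pow_apply, ZMod.natCast_val, ZMod.cast_id',
    id, rho_apply, hf, Equiv.Perm.coe_inv, Equiv.apply_symm_apply]

lemma apply_add_of_Amat_eq {n : ℕ} [NeZero n] {σ p q : Equiv.Perm (ZMod n)}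
    (hA : Amat n = PM n p * Bmat n σ * PM n q) (i k : ZMod n) :
    σ (q k + p.symm i) = k + i := by
  have hik := congrFun (congrFun hA i) k
  rw [mul_PM_apply, PM_mul_apply] at hik
  exact (MvPolynomial.X_injective hik).symm

lemma apply_add_one_of_Amat_eq {n : ℕ} [NeZero n] {σ p q : Equiv.Perm (ZMod n)}
    (hA : Amat n = PM n p * Bmat n σ * PM n q) (y : ZMod n) :
    σ (y + 1) = σ y + (p 1 - p 0) := by
  have h₁ := apply_add_of_Amat_eq hA (p 1) (q.symm y)
  have h₀ := apply_add_of_Amat_eq hA (p 0) (q.symm y)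
  simp only [Equiv.apply_symm_apply, Equiv.symm_apply_apply, add_zero] at h₁ h₀
  rw [h₁, h₀]
  ring

/-- If `A = P B Q` for permutation matrices `P, Q`, then `σ⁻¹ρσ = ρ^{j-i}` for some
distinct `i, j`; in particular `σρσ⁻¹ ∈ ⟨ρ⟩`. -/
theorem stmt7 (n : ℕ) [NeZero n] (σ : Equiv.Perm (ZMod n))
    (h : ∃ p q : Equiv.Perm (ZMod n), Amat n = PM n p * Bmat n σ * PM n q) :
    (∃ i j : ℤ, i ≠ j ∧ σ⁻¹ * rho n * σ = rho n ^ (j - i)) ∧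
      σ * rho n * σ⁻¹ ∈ Subgroup.zpowers (rho n) := by
  obtain ⟨p, q, hA⟩ := h
  have hconj : σ * rho n * σ⁻¹ ∈ Subgroup.zpowers (rho n) :=
    mul_rho_mul_inv_eq_pow (apply_add_one_of_Amat_eq hA) ▸ Subgroup.npow_mem_zpowers _ _
  have hρ : IsOfFinOrder (rho n) := isOfFinOrder_of_finite _
  exact ⟨exists_ne_zpow_sub_of_mem_zpowers hρ
    (inv_mul_mul_mem_zpowers_of_mul_mul_inv_mem hρ hconj), hconj⟩
end

section
/- The polytope Ψ_{n,n}, defined as the convex hull of all tensor (Kronecker) products A ⊗ B of n×n doubly stochastic matrices A, B, is contained in the polytope Φ_{n,n} ⊆ Ω_{n²} defined by the Friedland linear constraints. -/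
/-! A Kronecker product `A ⊗ B` of doubly stochastic matrices has all row and column sums `1`,
and each partial sum in Friedland's constraints collapses, the other factor's row or column sum
being `1`, to a single entry of `A` or `B` that does not involve the index the constraint varies.
Since `Φ_{n,n}` is cut out by linear equations and nonnegativity, it is convex, hence contains
the convex hull `Ψ_{n,n}` of these products. -/

open Finset Matrix

open scoped Kronecker

namespace Matrix

variable {l m n p α : Type*} [NonUnitalNonAssocSemiring α]

theorem sum_kronecker_row [Fintype m] [Fintype p] (A : Matrix l m α) (B : Matrix n p α)
    (i : l × n) : ∑ j, (A ⊗ₖ B) i j = (∑ j, A i.1 j) * ∑ j, B i.2 j := by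
  rw [Fintype.sum_prod_type, sum_mul_sum]
  rfl

theorem sum_kronecker_col [Fintype l] [Fintype n] (A : Matrix l m α) (B : Matrix n p α)
    (j : m × p) : ∑ i, (A ⊗ₖ B) i j = (∑ i, A i j.1) * ∑ i, B i j.2 := by
  rw [Fintype.sum_prod_type, sum_mul_sum]
  rfl

end Matrix

section Friedland

variable {n : ℕ} [NeZero n]

theorem convex_Phi : Convex ℝ (Phi n) := by
  rintro C ⟨hC0, hC1, hC2, hC3, hC4, hC5, hC6⟩ D ⟨hD0, hD1, hD2, hD3, hD4, hD5, hD6⟩ a b ha hb hab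
  have entry : ∀ p q, (a • C + b • D) p q = a * C p q + b * D p q := fun _ _ => rfl
  refine ⟨fun p q => ?_, fun p => ?_, fun q => ?_, fun i k l => ?_, fun i k l => ?_,
    fun i j k => ?_, fun i j k => ?_⟩ <;>
    simp only [entry, sum_add_distrib, ← mul_sum]
  · exact add_nonneg (mul_nonneg ha (hC0 p q)) (mul_nonneg hb (hD0 p q))
  · rw [hC1, hD1, mul_one, mul_one, hab]
  · rw [hC2, hD2, mul_one, mul_one, hab]
  · rw [hC3, hD3]
  · rw [hC4, hD4]
  · rw [hC5, hD5]
  · rw [hC6, hD6]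

theorem kronecker_mem_Phi {A B : Matrix (ZMod n) (ZMod n) ℝ} (hA : IsDS n A) (hB : IsDS n B) :
    A ⊗ₖ B ∈ Phi n := by
  obtain ⟨hA0, hA1, hA2⟩ := hA
  obtain ⟨hB0, hB1, hB2⟩ := hB
  refine ⟨fun p q => mul_nonneg (hA0 _ _) (hB0 _ _), fun p => ?_, fun q => ?_,
    fun i k l => ?_, fun i k l => ?_, fun i j k => ?_, fun i j k => ?_⟩
  · rw [sum_kronecker_row, hA1, hB1, one_mul]
  · rw [sum_kronecker_col, hA2, hB2, one_mul]
  all_goals simp only [kronecker_apply, ← sum_mul, ← mul_sum, hA1, hA2, hB1, hB2]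

end Friedland

/-- `Ψ_{n,n} ⊆ Φ_{n,n}`. -/
theorem stmt8 (n : ℕ) [NeZero n] : Psi n ⊆ Phi n :=
  convexHull_min (by rintro _ ⟨A, B, hA, hB, rfl⟩; exact kronecker_mem_Phi hA hB) convex_Phi
end

section
/- The matrix T (with entries T_{(i,k),(j,l)} = (1/n)·[σρ^{j-1}(l) = ρ^{i-1}(k)]) belongs to the polytope Φ_{n,n}; moreover for each fixed pair (i,j), the n×n block (T_{(i,k),(j,l)})_{k,l} equals 1/n times a permutation matrix. -/
open Finset Matrix

theorem Fintype.sum_ite_equiv_apply_eq {α R : Type*} [Fintype α] [DecidableEq α]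
    [AddCommMonoid R] (e : α ≃ α) (b : α) (c : R) :
    ∑ x, (if e x = b then c else 0) = c := by
  rw [e.sum_comp (fun y => if y = b then c else 0), Finset.sum_ite_eq' univ b, if_pos (mem_univ b)]

theorem ZMod.sum_const_one_div (n : ℕ) [NeZero n] : ∑ _x : ZMod n, (1 / n : ℝ) = 1 := by
  rw [sum_const, card_univ, ZMod.card, nsmul_eq_mul, mul_one_div_cancel (NeZero.ne _)]

namespace Tmat

variable {n : ℕ} (σ : Equiv.Perm (ZMod n))

theorem apply (i k j l : ZMod n) :
    Tmat n σ (i, k) (j, l) = if σ (l + j) = k + i then (1 : ℝ) / n else 0 := rfl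

theorem block_eq_smul_PM (i j k l : ZMod n) :
    Tmat n σ (i, k) (j, l) =
      (1 / n : ℝ) * PM n ((Equiv.addRight j).trans (σ.trans (Equiv.subRight i))) k l := by
  simp [apply, PM, sub_eq_iff_eq_add]

variable [NeZero n]

/-! Each entry of `T` is `1/n` on the solutions of `σ (l + j) = k + i` and every index occurs
there through a bijection of `ZMod n`, so every sum of `T` over one index equals `1/n`. -/

theorem sum_fst_left (k : ZMod n) (q : ZMod n × ZMod n) : ∑ i, Tmat n σ (i, k) q = 1 / n := by
  obtain ⟨j, l⟩ := q
  simp only [apply, eq_comm (a := σ _)]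
  exact Fintype.sum_ite_equiv_apply_eq (Equiv.addLeft k) _ _

theorem sum_snd_left (i : ZMod n) (q : ZMod n × ZMod n) : ∑ k, Tmat n σ (i, k) q = 1 / n := by
  obtain ⟨j, l⟩ := q
  simp only [apply, eq_comm (a := σ _)]
  exact Fintype.sum_ite_equiv_apply_eq (Equiv.addRight i) _ _

theorem sum_fst_right (p : ZMod n × ZMod n) (l : ZMod n) : ∑ j, Tmat n σ p (j, l) = 1 / n :=
  Fintype.sum_ite_equiv_apply_eq ((Equiv.addLeft l).trans σ) _ _

theorem sum_snd_right (p : ZMod n × ZMod n) (j : ZMod n) : ∑ l, Tmat n σ p (j, l) = 1 / n :=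
  Fintype.sum_ite_equiv_apply_eq ((Equiv.addRight j).trans σ) _ _

theorem sum_row (p : ZMod n × ZMod n) : ∑ q, Tmat n σ p q = 1 := by
  simp only [Fintype.sum_prod_type, sum_snd_right, ZMod.sum_const_one_div]

theorem sum_col (q : ZMod n × ZMod n) : ∑ p, Tmat n σ p q = 1 := by
  simp only [Fintype.sum_prod_type, sum_snd_left, ZMod.sum_const_one_div]

theorem mem_Phi : Tmat n σ ∈ Phi n :=
  ⟨fun _ _ => by unfold Tmat; positivity, sum_row σ, sum_col σ,
    fun _ _ _ => by rw [sum_fst_right, sum_fst_right],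
    fun _ _ _ => by rw [sum_fst_left, sum_fst_right],
    fun _ _ _ => by rw [sum_snd_right, sum_snd_right],
    fun _ _ _ => by rw [sum_snd_left, sum_snd_right]⟩

end Tmat

/-- `T ∈ Φ_{n,n}`, and each `(i,j)` block of `T` is `1/n` times a permutation matrix. -/
theorem stmt11 (n : ℕ) [NeZero n] (σ : Equiv.Perm (ZMod n)) :
    Tmat n σ ∈ Phi n ∧
      ∀ i j : ZMod n, ∃ τ : Equiv.Perm (ZMod n),
        ∀ k l : ZMod n, Tmat n σ (i, k) (j, l) = (1 / n : ℝ) * PM n τ k l :=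
  ⟨Tmat.mem_Phi σ, fun i j => ⟨_, Tmat.block_eq_smul_PM σ i j⟩⟩
end

section
/- Suppose C ∈ Φ_{n,n} and for each pair (i,j) the support of the block (C_{(i,k),(j,l)})_{k,l} is contained in the support of a fixed permutation matrix P^{(i,j)}. Then there is a doubly stochastic matrix M ∈ Ω_n such that C_{(i,k),(j,l)} = M_{i,j} · P^{(i,j)}_{k,l}. -/
open Finset Matrix

/-! In every row of a block of `C ∈ Φ_{n,n}` the support of `P^{(i,j)}` leaves a single
possibly nonzero entry, which therefore equals the row sum; by the partial-sum constraints that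
row sum depends only on the block `(i,j)`. These block masses form a doubly stochastic matrix. -/

def blockMass (n : ℕ) [NeZero n] (C : Matrix (ZMod n × ZMod n) (ZMod n × ZMod n) ℝ) :
    Matrix (ZMod n) (ZMod n) ℝ :=
  fun i j => ∑ l, C (i, 0) (j, l)

theorem isDS_blockMass (n : ℕ) [NeZero n] {C : Matrix (ZMod n × ZMod n) (ZMod n × ZMod n) ℝ}
    (hC : C ∈ Phi n) : IsDS n (blockMass n C) := by
  obtain ⟨hnn, hrow, -, -, hcolBlock, -, -⟩ := hC
  unfold blockMass
  refine ⟨fun i j => sum_nonneg fun l _ => hnn _ _, fun i => ?_, fun j => ?_⟩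
  · simpa only [Fintype.sum_prod_type] using hrow (i, 0)
  · calc ∑ i, ∑ l, C (i, 0) (j, l) = ∑ l, ∑ i, C (i, 0) (j, l) := sum_comm
      _ = ∑ l, ∑ i, C (0, 0) (i, l) := sum_congr rfl fun l _ => hcolBlock j 0 l
      _ = 1 := by
        rw [sum_comm]
        simpa only [Fintype.sum_prod_type] using hrow (0, 0)

theorem entry_eq_rowSum_mul_PM {n : ℕ} [NeZero n] (σ : Equiv.Perm (ZMod n))
    {B : Matrix (ZMod n) (ZMod n) ℝ} (hB : ∀ k l, B k l ≠ 0 → σ l = k) (k l : ZMod n) :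
    B k l = (∑ l', B k l') * PM n σ k l := by
  by_cases h : σ l = k
  · have hsum : ∑ l', B k l' = B k l := sum_eq_single l
      (fun l' _ hl' => by_contra fun hne => hl' (σ.injective ((hB k l' hne).trans h.symm)))
      (by simp)
    simp [PM, h, hsum]
  · have hzero : B k l = 0 := by_contra fun hne => h (hB k l hne)
    simp [PM, h, hzero]

/-- If `C ∈ Φ_{n,n}` and each `(i,j)` block of `C` is supported inside a fixed permutation
matrix `P^{(i,j)}`, then `C_{(i,k),(j,l)} = M_{i,j} · P^{(i,j)}_{k,l}` for some doubly
stochastic matrix `M`. -/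
theorem stmt13 (n : ℕ) [NeZero n]
    (C : Matrix (ZMod n × ZMod n) (ZMod n × ZMod n) ℝ) (hC : C ∈ Phi n)
    (p : ZMod n → ZMod n → Equiv.Perm (ZMod n))
    (hsupp : ∀ i j k l, C (i, k) (j, l) ≠ 0 → p i j l = k) :
    ∃ M : Matrix (ZMod n) (ZMod n) ℝ, IsDS n M ∧
      ∀ i j k l, C (i, k) (j, l) = M i j * PM n (p i j) k l := by
  refine ⟨blockMass n C, isDS_blockMass n hC, fun i j k l => ?_⟩
  obtain ⟨-, -, -, -, -, hrowBlock, -⟩ := hC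
  rw [entry_eq_rowSum_mul_PM (B := fun k l => C (i, k) (j, l)) (p i j) (hsupp i j) k l,
    hrowBlock i j k, blockMass]
end

section
/- Let n ≥ 4 and σ ∈ S_n with σρσ⁻¹ ∉ ⟨ρ⟩, where ρ = (1 2 … n). Then the matrix T with T_{(i,k),(j,l)} = (1/n)·[σρ^{j-1}(l) = ρ^{i-1}(k)] does not belong to Ψ_{n,n} = conv{P ⊗ Q : P, Q ∈ Ω_n}. -/
open Finset Matrix

/-!
If `T` lay in `Ψ_{n,n}`, then, all weights and entries being nonnegative, some Kronecker
product `A ⊗ B` of doubly stochastic matrices would be supported inside the support of `T`.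
Choosing for each column `j` of `A` a positive entry `A (I j) j` and for each column `l` of `B`
a positive entry `B (K l) l` then forces `σ (l + j) = K l + I j` for all `j, l`, so
`σ (1 + x) = c + σ x` with `c = I 1 - I 0`. Hence `σ ρ σ⁻¹` is the translation by `c`, which
is a power of `ρ`.
-/

lemma exists_mem_forall_eq_zero_of_mem_convexHull {m n : Type*} {s : Set (Matrix m n ℝ)}
    (hs : ∀ M ∈ s, ∀ i j, 0 ≤ M i j) {X : Matrix m n ℝ} (hX : X ∈ convexHull ℝ s) :
    ∃ M ∈ s, ∀ i j, X i j = 0 → M i j = 0 := by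
  suffices convexHull ℝ s ⊆
      {X | (∀ i j, 0 ≤ X i j) ∧ ∃ M ∈ s, ∀ i j, X i j = 0 → M i j = 0} from (this hX).2
  refine convexHull_min (fun M hM => ⟨hs M hM, M, hM, fun _ _ h => h⟩) ?_
  rintro X ⟨hX0, MX, hMX, hXsupp⟩ Y ⟨hY0, MY, hMY, hYsupp⟩ a b ha hb hab
  have haX i j : 0 ≤ a * X i j := mul_nonneg ha (hX0 i j)
  have hbY i j : 0 ≤ b * Y i j := mul_nonneg hb (hY0 i j)
  refine ⟨fun i j => add_nonneg (haX i j) (hbY i j), ?_⟩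
  have hsum_eq_zero {i j} (h : (a • X + b • Y) i j = 0) : a * X i j = 0 ∧ b * Y i j = 0 :=
    (add_eq_zero_iff_of_nonneg (haX i j) (hbY i j)).1 h
  rcases ha.eq_or_lt with rfl | ha
  · have hb : b ≠ 0 := by linarith
    exact ⟨MY, hMY, fun i j h =>
      hYsupp i j ((mul_eq_zero.1 (hsum_eq_zero h).2).resolve_left hb)⟩
  · exact ⟨MX, hMX, fun i j h =>
      hXsupp i j ((mul_eq_zero.1 (hsum_eq_zero h).1).resolve_left ha.ne')⟩

lemma IsDS.exists_pos {n : ℕ} [NeZero n] {M : Matrix (ZMod n) (ZMod n) ℝ} (hM : IsDS n M)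
    (j : ZMod n) : ∃ i, 0 < M i j := by
  by_contra! h
  have : ∑ i, M i j = 0 := Finset.sum_eq_zero fun i _ => (h i).antisymm (hM.1 i j)
  linarith [hM.2.2 j]

lemma IsDS.kronecker_nonneg {n : ℕ} [NeZero n] {A B : Matrix (ZMod n) (ZMod n) ℝ}
    (hA : IsDS n A) (hB : IsDS n B) (p q : ZMod n × ZMod n) :
    0 ≤ kroneckerMap (· * ·) A B p q :=
  mul_nonneg (hA.1 _ _) (hB.1 _ _)

lemma Tmat_eq_zero_iff {n : ℕ} [NeZero n] {σ : Equiv.Perm (ZMod n)} {p q : ZMod n × ZMod n} :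
    Tmat n σ p q = 0 ↔ σ (q.2 + q.1) ≠ p.2 + p.1 := by
  simp [Tmat, NeZero.ne n]

lemma exists_map_one_add_of_kronecker_support {n : ℕ} [NeZero n] {σ : Equiv.Perm (ZMod n)}
    {A B : Matrix (ZMod n) (ZMod n) ℝ} (hA : IsDS n A) (hB : IsDS n B)
    (hsupp : ∀ p q, Tmat n σ p q = 0 → kroneckerMap (· * ·) A B p q = 0) :
    ∃ c, ∀ x, σ (1 + x) = c + σ x := by
  choose I hI using hA.exists_pos
  choose K hK using hB.exists_pos
  have hσ (j l : ZMod n) : σ (l + j) = K l + I j := by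
    by_contra hne
    exact (mul_pos (hI j) (hK l)).ne' (hsupp (I j, K l) (j, l) (Tmat_eq_zero_iff.2 hne))
  refine ⟨I 1 - I 0, fun x => ?_⟩
  have h0 : σ x = K x + I 0 := by simpa using hσ 0 x
  rw [add_comm, hσ 1 x, h0]
  ring

lemma Equiv.Perm.mul_addLeft_mul_inv {G : Type*} [AddGroup G] {σ : Equiv.Perm G} {a c : G}
    (h : ∀ x, σ (a + x) = c + σ x) : σ * Equiv.addLeft a * σ⁻¹ = Equiv.addLeft c := by
  ext x
  simpa using h (σ⁻¹ x)

lemma addLeft_mem_zpowers_rho {n : ℕ} (c : ZMod n) :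
    Equiv.addLeft c ∈ Subgroup.zpowers (rho n) :=
  Subgroup.mem_zpowers_iff.2
    ⟨c.cast, by rw [rho, Equiv.zsmul_addLeft, zsmul_one, ZMod.intCast_zmod_cast]⟩

theorem stmt15_general (n : ℕ) [NeZero n] (σ : Equiv.Perm (ZMod n))
    (hσ : σ * rho n * σ⁻¹ ∉ Subgroup.zpowers (rho n)) :
    Tmat n σ ∉ Psi n := by
  intro hT
  obtain ⟨_, ⟨A, B, hA, hB, rfl⟩, hsupp⟩ := exists_mem_forall_eq_zero_of_mem_convexHull
    (by rintro _ ⟨A, B, hA, hB, rfl⟩; exact hA.kronecker_nonneg hB) hT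
  obtain ⟨c, hc⟩ := exists_map_one_add_of_kronecker_support hA hB hsupp
  exact hσ (Equiv.Perm.mul_addLeft_mul_inv hc ▸ addLeft_mem_zpowers_rho c)

/-- For `n ≥ 4` and `σ` with `σρσ⁻¹ ∉ ⟨ρ⟩`, the matrix `T` does not belong to `Ψ_{n,n}`. -/
theorem stmt15 (n : ℕ) [NeZero n] (hn : 4 ≤ n) (σ : Equiv.Perm (ZMod n))
    (hσ : σ * rho n * σ⁻¹ ∉ Subgroup.zpowers (rho n)) :
    Tmat n σ ∉ Psi n :=
  stmt15_general n σ hσ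
end
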